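/- Let p ∈ ℤ[X] be a monic polynomial of degree d ≥ 1 that is irreducible over ℚ and has d distinct real roots ζ_1, …, ζ_d. Let T be the d × d Vandermonde matrix with (i,j)-entry ζ_i^{j−1}. Then the lattice T(ℤ^d) = {T k : k ∈ ℤ^d} is admissible, i.e. there exists δ > 0 such that for every k ∈ ℤ^d with k ≠ 0, the product ∏_{i=1}^{d} |(T k)_i| is at least δ. -/

import Mathlib

open Polynomial

/-- Let `p ∈ ℤ[X]` be a monic polynomial of degree `d ≥ 1`, irreducible over `ℚ`, with `d`
distinct real roots `ζ_1, …, ζ_d`, and let `T` be the Vandermonde matrix with `(i,j)`-entry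
`ζ_i^{j−1}`. Then the lattice `T(ℤ^d)` is admissible: there is `δ > 0` such that for every
nonzero `k ∈ ℤ^d`, `∏_i |(T k)_i| ≥ δ`. -/
theorem vandermonde_lattice_admissible (d : ℕ) (hd : 1 ≤ d) (p : Polynomial ℤ)
    (hmonic : p.Monic) (hdeg : p.natDegree = d)
    (hirr : Irreducible (p.map (Int.castRingHom ℚ)))
    (ζ : Fin d → ℝ) (hinj : Function.Injective ζ)
    (hroot : ∀ i, Polynomial.aeval (ζ i) p = 0) :
    ∃ δ > 0, ∀ k : Fin d → ℤ, k ≠ 0 →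
      δ ≤ ∏ i, |(Matrix.of fun i j : Fin d => ζ i ^ (j : ℕ)).mulVec (fun j => (k j : ℝ)) i| := by
  classical
  refine ⟨1, one_pos, fun k hk => ?_⟩
  set pQ : Polynomial ℚ := p.map (Int.castRingHom ℚ) with hpQdef
  have hpQmonic : pQ.Monic := hmonic.map _
  have hpQdeg : pQ.natDegree = d := by
    rw [hpQdef, Polynomial.natDegree_map_eq_of_injective
      (Int.cast_injective (α := ℚ)), hdeg]
  have hpQne : pQ ≠ 0 := hpQmonic.ne_zero
  haveI : Fact (Irreducible pQ) := ⟨hirr⟩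
  set K := AdjoinRoot pQ with hKdef
  set θ : K := AdjoinRoot.root pQ with hθdef
  haveI : FiniteDimensional ℚ K := (AdjoinRoot.powerBasis hpQne).finite
  -- minimal polynomial of θ
  have haevalθ : Polynomial.aeval θ pQ = 0 := AdjoinRoot.aeval_eq pQ ▸ by
    simp [AdjoinRoot.mk_self]
  have hmin : minpoly ℚ θ = pQ :=
    (minpoly.eq_of_irreducible_of_monic hirr haevalθ hpQmonic).symm
  -- θ is integral over ℤ
  have hθint : IsIntegral ℤ θ := by
    refine ⟨p, hmonic, ?_⟩
    rw [← Polynomial.aeval_def, ← Polynomial.aeval_map_algebraMap ℚ]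
    exact haevalθ
  -- the polynomial q built from k
  set q : Polynomial ℤ := ∑ j : Fin d, Polynomial.C (k j) * Polynomial.X ^ (j : ℕ) with hqdef
  have hqcoeff : ∀ j : Fin d, q.coeff (j : ℕ) = k j := by
    intro j
    rw [hqdef, Polynomial.finset_sum_coeff]
    rw [Finset.sum_eq_single j]
    · simp
    · intro b _ hb
      simp only [Polynomial.coeff_C_mul, Polynomial.coeff_X_pow]
      rw [if_neg (fun h => hb (Fin.ext h.symm)), mul_zero]
    · simp
  have hqdeg : q.degree < (d : ℕ) := by
    rw [hqdef]
    refine lt_of_le_of_lt (Polynomial.degree_sum_le _ _) ?_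
    rw [Finset.sup_lt_iff (by exact_mod_cast WithBot.bot_lt_coe d)]
    intro j _
    refine lt_of_le_of_lt (Polynomial.degree_C_mul_X_pow_le _ _) ?_
    exact_mod_cast j.isLt
  have hqne : q ≠ 0 := by
    obtain ⟨j, hj⟩ := Function.ne_iff.mp hk
    intro h
    apply hj
    rw [← hqcoeff j, h]
    simp
  -- x = q(θ) is nonzero
  set x : K := Polynomial.aeval θ q with hxdef
  have hxq : x = Polynomial.aeval θ (q.map (Int.castRingHom ℚ)) := by
    rw [hxdef, ← Polynomial.aeval_map_algebraMap ℚ]; rfl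
  have hxne : x ≠ 0 := by
    intro h
    have hqQne : q.map (Int.castRingHom ℚ) ≠ 0 := by
      refine fun h0 => hqne ?_
      exact Polynomial.map_injective _ (Int.cast_injective (α := ℚ)) (by simpa using h0)
    have hdvd : minpoly ℚ θ ∣ q.map (Int.castRingHom ℚ) :=
      minpoly.dvd ℚ θ (by rw [← hxq, h])
    have := Polynomial.degree_le_of_dvd hdvd hqQne
    rw [hmin] at this
    have h2 : (q.map (Int.castRingHom ℚ)).degree ≤ q.degree :=
      Polynomial.degree_map_le
    have h3 : pQ.degree = (d : ℕ) := by
      rw [Polynomial.degree_eq_natDegree hpQne, hpQdeg]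
    rw [h3] at this
    exact absurd (lt_of_le_of_lt (this.trans h2) hqdeg) (lt_irrefl _)
  -- x is integral over ℤ
  have hxint : IsIntegral ℤ x := by
    refine IsIntegral.of_mem_of_fg (Algebra.adjoin ℤ {θ}) hθint.fg_adjoin_singleton x ?_
    rw [Algebra.adjoin_singleton_eq_range_aeval]
    exact ⟨q, rfl⟩
  -- the norm of x is a nonzero integer
  have hnormint : IsIntegral ℤ (Algebra.norm ℚ x) := Algebra.isIntegral_norm ℚ hxint
  obtain ⟨n, hn⟩ := IsIntegrallyClosed.isIntegral_iff.mp hnormint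
  have hnne : n ≠ 0 := by
    intro h
    apply (Algebra.norm_ne_zero_iff (R := ℚ) (S := K)).mpr hxne
    rw [← hn, h, map_zero]
  -- embeddings of K into ℂ
  have haevalC : ∀ i, Polynomial.aeval ((ζ i : ℂ)) pQ = 0 := by
    intro i
    rw [hpQdef, show Int.castRingHom ℚ = algebraMap ℤ ℚ from rfl,
      Polynomial.aeval_map_algebraMap]
    have : ((ζ i : ℝ) : ℂ) = algebraMap ℝ ℂ (ζ i) := rfl
    rw [this, Polynomial.aeval_algebraMap_apply, hroot i, map_zero]
  set σ : Fin d → (K →ₐ[ℚ] ℂ) := fun i => AdjoinRoot.liftAlgHom pQ (Algebra.ofId ℚ ℂ) ((ζ i : ℂ)) (haevalC i)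
    with hσdef
  have hσroot : ∀ i, σ i θ = (ζ i : ℂ) := by
    intro i
    rw [hσdef, hθdef]
    exact AdjoinRoot.liftAlgHom_root pQ (Algebra.ofId ℚ ℂ) _ (haevalC i)
  have hσinj : Function.Injective σ := by
    intro i j h
    apply hinj
    have h2 : σ i θ = σ j θ := by rw [h]
    rw [hσroot i, hσroot j] at h2
    exact_mod_cast h2
  have hfinrank : Module.finrank ℚ K = d := by
    rw [(AdjoinRoot.powerBasis hpQne).finrank, AdjoinRoot.powerBasis_dim, hpQdeg]
  have hσbij : Function.Bijective σ := by
    rw [Fintype.bijective_iff_injective_and_card]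
    exact ⟨hσinj, by rw [AlgHom.card, hfinrank, Fintype.card_fin]⟩
  -- compute the product
  have hprod : ((n : ℝ) : ℂ) = ∏ i, ((Polynomial.aeval (ζ i) q : ℝ) : ℂ) := by
    have h1 : algebraMap ℚ ℂ (Algebra.norm ℚ x) = ∏ τ : K →ₐ[ℚ] ℂ, τ x :=
      Algebra.norm_eq_prod_embeddings ℚ ℂ x
    rw [← hn] at h1
    have h2 : ∏ τ : K →ₐ[ℚ] ℂ, τ x = ∏ i, σ i x :=
      (Fintype.prod_bijective σ hσbij _ _ (fun i => rfl)).symm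
    have h3 : ∀ i, σ i x = ((Polynomial.aeval (ζ i) q :ℝ) : ℂ) := by
      intro i
      rw [hxq, ← Polynomial.aeval_algHom_apply (σ i) θ (q.map (Int.castRingHom ℚ)), hσroot i,
        show Int.castRingHom ℚ = algebraMap ℤ ℚ from rfl, Polynomial.aeval_map_algebraMap,
        show ((ζ i : ℝ) : ℂ) = algebraMap ℝ ℂ (ζ i) from rfl,
        Polynomial.aeval_algebraMap_apply]
      simp
    rw [h2, Finset.prod_congr rfl (fun i _ => h3 i)] at h1
    simpa using h1
  have hprodR : (n : ℝ) = ∏ i, Polynomial.aeval (ζ i) q := by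
    have := hprod
    push_cast at this
    exact_mod_cast this
  -- identify the matrix product with the polynomial values
  have hentry : ∀ i, (Matrix.of fun i j : Fin d => ζ i ^ (j : ℕ)).mulVec
      (fun j => (k j : ℝ)) i = Polynomial.aeval (ζ i) q := by
    intro i
    rw [hqdef, map_sum]
    simp only [Matrix.mulVec, dotProduct, Matrix.of_apply, map_mul, Polynomial.aeval_C,
      Polynomial.aeval_X_pow, map_pow]
    exact Finset.sum_congr rfl fun j _ => by simp [mul_comm]
  calc (1 : ℝ) ≤ |(n : ℝ)| := by
        rw [← Int.cast_abs]; exact_mod_cast Int.one_le_abs hnne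
    _ = ∏ i, |Polynomial.aeval (ζ i) q| := by rw [hprodR, Finset.abs_prod]
    _ = ∏ i, |(Matrix.of fun i j : Fin d => ζ i ^ (j : ℕ)).mulVec (fun j => (k j : ℝ)) i| := by
        exact Finset.prod_congr rfl fun i _ => by rw [hentry i]
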